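/- arXiv:2206.05434 — 2 statements merged into one kernel-verified Lean document; each statement's English description precedes it below -/
import Mathlib

section
/- Let n ≥ 1 be a natural number and let s be a real number with (1 - 1/√2)·2^n < s ≤ 2^{n-1} - 1. Then 4^n / (2·((2^n - s)² + s²)) ≤ 1 - 1/(4^{n-1} + 1). -/
/-! Writing `m = 2^(n-1)`, the denominator is `2((2m - s)² + s²) = 4(m² + (m - s)²)`, so the
quotient equals `m² / (m² + (m - s)²)`; the hypothesis `s ≤ m - 1` gives `(m - s)² ≥ 1`, hence
the bound `m² / (m² + 1) = 1 - 1/(m² + 1)`. -/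

lemma sq_two_mul_div_le_one_sub_inv_sq_add_one {m s : ℝ} (hs : s ≤ m - 1) :
    (2 * m) ^ 2 / (2 * ((2 * m - s) ^ 2 + s ^ 2)) ≤ 1 - 1 / (m ^ 2 + 1) := by
  have hgap : 1 ≤ (m - s) ^ 2 := by nlinarith
  calc (2 * m) ^ 2 / (2 * ((2 * m - s) ^ 2 + s ^ 2))
      = m ^ 2 / (m ^ 2 + (m - s) ^ 2) := by
        rw [show 2 * ((2 * m - s) ^ 2 + s ^ 2) = 4 * (m ^ 2 + (m - s) ^ 2) by ring,
          show (2 * m) ^ 2 = 4 * m ^ 2 by ring, mul_div_mul_left _ _ four_ne_zero]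
    _ ≤ m ^ 2 / (m ^ 2 + 1) := by gcongr
    _ = 1 - 1 / (m ^ 2 + 1) := by field_simp; ring

theorem stmt_4_general (n : ℕ) (hn : 1 ≤ n) (s : ℝ)
    (hs2 : s ≤ (2 : ℝ) ^ (n - 1) - 1) :
    (4 : ℝ) ^ n / (2 * (((2 : ℝ) ^ n - s) ^ 2 + s ^ 2)) ≤
      1 - 1 / ((4 : ℝ) ^ (n - 1) + 1) := by
  obtain ⟨k, rfl⟩ := Nat.exists_eq_add_of_le' hn
  have htwo : (2 : ℝ) ^ (k + 1) = 2 * 2 ^ k := pow_succ' 2 k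
  have hfour (j : ℕ) : (4 : ℝ) ^ j = (2 ^ j) ^ 2 := by
    rw [← pow_mul, mul_comm, pow_mul]; norm_num
  rw [Nat.add_sub_cancel] at hs2 ⊢
  rw [hfour, hfour, htwo]
  exact sq_two_mul_div_le_one_sub_inv_sq_add_one hs2

theorem stmt_4 (n : ℕ) (hn : 1 ≤ n) (s : ℝ)
    (hs1 : (1 - 1 / Real.sqrt 2) * 2 ^ n < s) (hs2 : s ≤ (2 : ℝ) ^ (n - 1) - 1) :
    (4 : ℝ) ^ n / (2 * (((2 : ℝ) ^ n - s) ^ 2 + s ^ 2)) ≤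
      1 - 1 / ((4 : ℝ) ^ (n - 1) + 1) :=
  stmt_4_general n hn s hs2
end

section
/- Let P₀ and P₁ be probability distributions on a finite set Y. Then Σ_{y ∈ Y} ((P₀(y) + P₁(y))/2) · ((P₀(y)² + P₁(y)²)/(P₀(y) + P₁(y))²) ≤ 1/2 + D_TV(P₀, P₁), where D_TV(P₀,P₁) = (1/2)·Σ_y |P₀(y) - P₁(y)| is the total variation distance, and terms with P₀(y)+P₁(y) = 0 are interpreted as 0. -/
open Finset in
theorem stmt_10 {Y : Type*} [Fintype Y] (P₀ P₁ : Y → ℝ)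
    (h0 : ∀ y, 0 ≤ P₀ y) (h1 : ∀ y, 0 ≤ P₁ y)
    (hs0 : ∑ y, P₀ y = 1) (hs1 : ∑ y, P₁ y = 1) :
    ∑ y, (P₀ y + P₁ y) / 2 * ((P₀ y ^ 2 + P₁ y ^ 2) / (P₀ y + P₁ y) ^ 2) ≤
      1 / 2 + (1 / 2) * ∑ y, |P₀ y - P₁ y| := by
  have key : ∀ y, (P₀ y + P₁ y) / 2 * ((P₀ y ^ 2 + P₁ y ^ 2) / (P₀ y + P₁ y) ^ 2)
      ≤ (P₀ y + P₁ y) / 4 + |P₀ y - P₁ y| / 2 := by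
    intro y
    set a := P₀ y; set b := P₁ y
    have ha := h0 y; have hb := h1 y
    rcases eq_or_lt_of_le (add_nonneg ha hb) with hs | hs
    · rw [← hs]
      have ha0 : a = 0 := by nlinarith
      have hb0 : b = 0 := by nlinarith
      simp [ha0, hb0]
    · have hne : (a + b) ^ 2 ≠ 0 := by positivity
      have heq : (a + b) / 2 * ((a ^ 2 + b ^ 2) / (a + b) ^ 2)
          = (a ^ 2 + b ^ 2) / (2 * (a + b)) := by
        field_simp
      rw [heq, div_le_iff₀ (by positivity)]
      have habs : |a - b| * (a + b) ≥ (a - b) ^ 2 := by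
        rcases abs_cases (a - b) with ⟨h, _⟩ | ⟨h, _⟩ <;> rw [h] <;> nlinarith
      nlinarith [habs]
  calc ∑ y, (P₀ y + P₁ y) / 2 * ((P₀ y ^ 2 + P₁ y ^ 2) / (P₀ y + P₁ y) ^ 2)
      ≤ ∑ y, ((P₀ y + P₁ y) / 4 + |P₀ y - P₁ y| / 2) := Finset.sum_le_sum fun y _ => key y
    _ = 1 / 2 + (1 / 2) * ∑ y, |P₀ y - P₁ y| := by
        rw [Finset.sum_add_distrib, ← Finset.sum_div, Finset.sum_add_distrib, hs0, hs1,
          ← Finset.sum_div]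
        ring
end
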